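/- Let f: ℕ → ℝ≥0 be any function and let T be a bifurcating tree. Then 𝔠_{var,f}(T) = ((f(0)+f(2))²/2)·C⁽²⁾(T). -/

import Mathlib

/-- Rooted trees encoded as a root together with the list of subtrees
rooted at its children. -/
inductive MTree : Type
  | node : List MTree → MTree

namespace MTree

/-- Number of leaves of a tree (a single node counts as one leaf). -/
def leafCount : MTree → ℕ
  | node ts => max 1 (ts.attach.map (fun x => leafCount x.1)).sum
decreasing_by
  have := List.sizeOf_lt_of_mem x.2
  simp only [node.sizeOf_spec]; omega

/-- `deltaF f T = Σ_{v ∈ V(T)} f (deg v)`, the `f`-size of `T`. -/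
noncomputable def deltaF (f : ℕ → ℝ) : MTree → ℝ
  | node ts => f ts.length + (ts.attach.map (fun x => deltaF f x.1)).sum
decreasing_by
  have := List.sizeOf_lt_of_mem x.2
  simp only [node.sizeOf_spec]; omega

/-- The Colless-like index relative to a "dissimilarity" `D` and a function `f`:
the sum, over all internal nodes `v`, of `D` applied to the list of `f`-sizes of
the subtrees rooted at the children of `v`. -/
noncomputable def cIndex (D : List ℝ → ℝ) (f : ℕ → ℝ) : MTree → ℝ
  | node ts => (if ts.isEmpty then 0 else D (ts.map (deltaF f)))
      + (ts.attach.map (fun x => cIndex D f x.1)).sum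
decreasing_by
  have := List.sizeOf_lt_of_mem x.2
  simp only [node.sizeOf_spec]; omega

/-- The Colless index of a (bifurcating) tree: the sum over the internal nodes of the
absolute value of the difference of the numbers of leaves of the two child subtrees. -/
def colless : MTree → ℕ
  | node ts =>
      (match ts with
       | [a, b] => ((a.leafCount : ℤ) - (b.leafCount : ℤ)).natAbs
       | _ => 0)
      + (ts.attach.map (fun x => colless x.1)).sum
decreasing_by
  have := List.sizeOf_lt_of_mem x.2
  simp only [node.sizeOf_spec]; omega

/-- The quadratic Colless index of a (bifurcating) tree. -/
def collessSq : MTree → ℕ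
  | node ts =>
      (match ts with
       | [a, b] => ((a.leafCount : ℤ) - (b.leafCount : ℤ)).natAbs ^ 2
       | _ => 0)
      + (ts.attach.map (fun x => collessSq x.1)).sum
decreasing_by
  have := List.sizeOf_lt_of_mem x.2
  simp only [node.sizeOf_spec]; omega

/-- A tree in the sense of the paper: no node of out-degree 1. -/
inductive WellFormed : MTree → Prop
  | node {ts : List MTree} : ts.length ≠ 1 → (∀ t ∈ ts, WellFormed t) →
      WellFormed (node ts)

/-- A bifurcating tree: every internal node has out-degree exactly 2. -/
inductive Bifurcating : MTree → Prop
  | node {ts : List MTree} : (ts.length = 0 ∨ ts.length = 2) →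
      (∀ t ∈ ts, Bifurcating t) → Bifurcating (node ts)

/-- Isomorphism of (list-encoded) trees: the lists of child subtrees match up to
a permutation and recursively isomorphic subtrees. -/
inductive Iso : MTree → MTree → Prop
  | node {ts us vs : List MTree} :
      List.Forall₂ Iso ts vs → vs.Perm us → Iso (node ts) (node us)

/-- A tree is fully symmetric when, for every internal node, the subtrees rooted at
its children are pairwise isomorphic. -/
inductive FullySymmetric : MTree → Prop
  | node {ts : List MTree} : (∀ s ∈ ts, ∀ t ∈ ts, Iso s t) →
      (∀ t ∈ ts, FullySymmetric t) → FullySymmetric (node ts)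

/-- The comb `K_n` with `n ≥ 1` leaves. -/
def comb : ℕ → MTree
  | 0 => node []
  | 1 => node []
  | n + 2 => node [node [], comb (n + 1)]

/-- The star `FS_n`, whose root has `n` children, all of them leaves. -/
def star (n : ℕ) : MTree := node (List.replicate n (node []))

/-- The median of a list of real numbers. -/
noncomputable def median (l : List ℝ) : ℝ :=
  let s := l.mergeSort (fun a b => a ≤ b)
  if l.length % 2 = 1 then s.getD (l.length / 2) 0
  else (s.getD (l.length / 2 - 1) 0 + s.getD (l.length / 2) 0) / 2

/-- The mean deviation from the median of a list of real numbers. -/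
noncomputable def MDM (l : List ℝ) : ℝ :=
  (l.map (fun x => |x - median l|)).sum / l.length

/-- The sample variance of a list of real numbers. -/
noncomputable def svar (l : List ℝ) : ℝ :=
  (l.map (fun x => (x - l.sum / l.length) ^ 2)).sum / ((l.length : ℝ) - 1)

/-- The sample standard deviation of a list of real numbers. -/
noncomputable def ssd (l : List ℝ) : ℝ := Real.sqrt (svar l)

end MTree

/-! A bifurcating tree with `n` leaves has `n - 1` internal nodes, so its `f`-size is the affine
function `(f 0 + f 2) * n - f 2` of `n`; the sample variance of a pair is half its squared
difference, hence each internal node contributes `(f 0 + f 2)² / 2` times its squared leaf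
imbalance. -/

theorem List.eq_nil_or_eq_pair {α : Type*} {l : List α} (h : l.length = 0 ∨ l.length = 2) :
    l = [] ∨ ∃ a b, l = [a, b] :=
  h.imp List.length_eq_zero_iff.mp List.length_eq_two.mp

namespace MTree

theorem one_le_leafCount : ∀ T : MTree, 1 ≤ T.leafCount
  | node ts => by rw [leafCount]; omega

@[simp]
theorem leafCount_node_nil : (node []).leafCount = 1 := by
  simp [leafCount]

@[simp]
theorem leafCount_node_pair (a b : MTree) :
    (node [a, b]).leafCount = a.leafCount + b.leafCount := by
  have := one_le_leafCount a
  simp only [leafCount, List.attach_cons, List.attach_nil, List.map_cons, List.map_nil,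
    List.sum_cons, List.sum_nil, add_zero]
  omega

@[simp]
theorem deltaF_node_nil (f : ℕ → ℝ) : deltaF f (node []) = f 0 := by
  simp [deltaF]

@[simp]
theorem deltaF_node_pair (f : ℕ → ℝ) (a b : MTree) :
    deltaF f (node [a, b]) = f 2 + (deltaF f a + deltaF f b) := by
  simp [deltaF]

@[simp]
theorem cIndex_node_nil (D : List ℝ → ℝ) (f : ℕ → ℝ) : cIndex D f (node []) = 0 := by
  simp [cIndex]

@[simp]
theorem cIndex_node_pair (D : List ℝ → ℝ) (f : ℕ → ℝ) (a b : MTree) :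
    cIndex D f (node [a, b]) = D [deltaF f a, deltaF f b] + (cIndex D f a + cIndex D f b) := by
  simp [cIndex]

@[simp]
theorem collessSq_node_nil : (node []).collessSq = 0 := by
  simp [collessSq]

theorem collessSq_node_pair (a b : MTree) :
    ((node [a, b]).collessSq : ℝ) =
      ((a.leafCount : ℝ) - b.leafCount) ^ 2 + (a.collessSq + b.collessSq) := by
  simp [collessSq, Nat.cast_natAbs, sq_abs]

theorem svar_pair (x y : ℝ) : svar [x, y] = (x - y) ^ 2 / 2 := by
  simp [svar]
  ring

theorem Bifurcating.deltaF_eq (f : ℕ → ℝ) {T : MTree} (hT : T.Bifurcating) :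
    deltaF f T = (f 0 + f 2) * T.leafCount - f 2 := by
  induction hT with
  | node hlen _ ih =>
    obtain rfl | ⟨a, b, rfl⟩ := List.eq_nil_or_eq_pair hlen
    · simp
    · simp only [deltaF_node_pair, leafCount_node_pair, ih a (by simp), ih b (by simp)]
      push_cast
      ring

end MTree

theorem cIndex_var_eq_collessSq_general (f : ℕ → ℝ)
    (T : MTree) (hT : T.Bifurcating) :
    MTree.cIndex MTree.svar f T = (f 0 + f 2) ^ 2 / 2 * T.collessSq := by
  induction hT with
  | node hlen hts ih =>
    obtain rfl | ⟨a, b, rfl⟩ := List.eq_nil_or_eq_pair hlen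
    · simp
    · rw [MTree.cIndex_node_pair, MTree.collessSq_node_pair, MTree.svar_pair,
        ih a (by simp), ih b (by simp),
        (hts a (by simp)).deltaF_eq f, (hts b (by simp)).deltaF_eq f]
      ring

/-- On bifurcating trees, the Colless-like index `𝔠_{var,f}` equals
`(f 0 + f 2)²/2` times the quadratic Colless index. -/
theorem cIndex_var_eq_collessSq (f : ℕ → ℝ) (hf : ∀ n, 0 ≤ f n)
    (T : MTree) (hT : T.Bifurcating) :
    MTree.cIndex MTree.svar f T = (f 0 + f 2) ^ 2 / 2 * T.collessSq :=
  cIndex_var_eq_collessSq_general f T hT
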